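/- Let V be a real inner product space, W ⊆ V a subspace admitting an orthogonal projection onto it, p, q positive integers, and J : V → V a symmetric linear map with J² = pJ + qI. If W is slant with slant angle θ with respect to J, then for all X, Y ∈ W: ⟨TX, TY⟩ = cos²θ·(p⟨X, TY⟩ + q⟨X, Y⟩) and ⟨NX, NY⟩ = sin²θ·(p⟨X, TY⟩ + q⟨X, Y⟩). -/

import Mathlib

open scoped RealInnerProductSpace

/-- The tangential part of `J X` with respect to the subspace `W`:
`T X := P_W (J X)` (also used for `t U := P_W (J U)` when `U ∈ Wᗮ`). -/
noncomputable def tang {V : Type*} [NormedAddCommGroup V] [InnerProductSpace ℝ V]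
    (W : Submodule ℝ V) [W.HasOrthogonalProjection] (J : V →ₗ[ℝ] V) (X : V) : V :=
  (Submodule.orthogonalProjectionOnto W (J X) : V)

/-- The normal part of `J X` with respect to the subspace `W`:
`N X := J X − T X` (also used for `n U := J U − t U` when `U ∈ Wᗮ`). -/
noncomputable def norm' {V : Type*} [NormedAddCommGroup V] [InnerProductSpace ℝ V]
    (W : Submodule ℝ V) [W.HasOrthogonalProjection] (J : V →ₗ[ℝ] V) (X : V) : V :=
  J X - tang W J X

theorem real_inner_map_map_eq_mul_of_norm_eq_mul {E F G : Type*}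
    [NormedAddCommGroup E] [InnerProductSpace ℝ E] [NormedAddCommGroup F] [InnerProductSpace ℝ F]
    [NormedAddCommGroup G] [InnerProductSpace ℝ G] (W : Submodule ℝ E)
    (A : E →ₗ[ℝ] F) (B : E →ₗ[ℝ] G) {c : ℝ} (h : ∀ x ∈ W, ‖A x‖ = c * ‖B x‖)
    {x y : E} (hx : x ∈ W) (hy : y ∈ W) : ⟪A x, A y⟫ = c ^ 2 * ⟪B x, B y⟫ := by
  rw [real_inner_eq_norm_add_mul_self_sub_norm_mul_self_sub_norm_mul_self_div_two,
    real_inner_eq_norm_add_mul_self_sub_norm_mul_self_sub_norm_mul_self_div_two (B x),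
    ← map_add, ← map_add, h x hx, h y hy, h (x + y) (W.add_mem hx hy)]
  ring

theorem real_inner_apply_apply_of_sq_eq {E : Type*} [NormedAddCommGroup E] [InnerProductSpace ℝ E]
    {J : E →ₗ[ℝ] E} (hJsym : ∀ x y : E, ⟪J x, y⟫ = ⟪x, J y⟫) {p q : ℝ}
    (hJ2 : ∀ v : E, J (J v) = p • J v + q • v) (x y : E) :
    ⟪J x, J y⟫ = p * ⟪x, J y⟫ + q * ⟪x, y⟫ := by
  rw [hJsym, hJ2, inner_add_right, real_inner_smul_right, real_inner_smul_right]

section TangentialNormal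

variable {V : Type*} [NormedAddCommGroup V] [InnerProductSpace ℝ V]
  (W : Submodule ℝ V) [W.HasOrthogonalProjection] (J : V →ₗ[ℝ] V)

theorem tang_mem (X : V) : tang W J X ∈ W :=
  (Submodule.orthogonalProjectionOnto W (J X)).2

theorem norm'_mem_orthogonal (X : V) : norm' W J X ∈ Wᗮ :=
  W.sub_starProjection_mem_orthogonal (J X)

theorem inner_tang_right_of_mem {Z : V} (hZ : Z ∈ W) (Y : V) :
    ⟪Z, tang W J Y⟫ = ⟪Z, J Y⟫ := by
  have h := Submodule.inner_right_of_mem_orthogonal hZ (norm'_mem_orthogonal W J Y)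
  rw [norm', inner_sub_right] at h
  linarith

theorem inner_norm'_norm' (X Y : V) :
    ⟪norm' W J X, norm' W J Y⟫ = ⟪J X, J Y⟫ - ⟪tang W J X, tang W J Y⟫ := by
  have hNT : ⟪norm' W J X, tang W J Y⟫ = 0 :=
    Submodule.inner_left_of_mem_orthogonal (tang_mem W J Y) (norm'_mem_orthogonal W J X)
  have hTJ : ⟪tang W J X, J Y⟫ = ⟪tang W J X, tang W J Y⟫ :=
    (inner_tang_right_of_mem W J (tang_mem W J X) Y).symm
  calc ⟪norm' W J X, norm' W J Y⟫ = ⟪norm' W J X, J Y⟫ := by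
        rw [show norm' W J Y = J Y - tang W J Y from rfl, inner_sub_right, hNT, sub_zero]
    _ = ⟪J X, J Y⟫ - ⟪tang W J X, tang W J Y⟫ := by rw [norm', inner_sub_left, hTJ]

end TangentialNormal

theorem slant_inner_identities_general {V : Type*} [NormedAddCommGroup V] [InnerProductSpace ℝ V]
    (W : Submodule ℝ V) [W.HasOrthogonalProjection]
    (p q : ℕ)
    (J : V →ₗ[ℝ] V)
    (hJsym : ∀ x y : V, ⟪J x, y⟫ = ⟪x, J y⟫)
    (hJ2 : ∀ v : V, J (J v) = (p : ℝ) • J v + (q : ℝ) • v)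
    (θ : ℝ)
    (hslant : ∀ X ∈ W, ‖tang W J X‖ = Real.cos θ * ‖J X‖) :
    ∀ X ∈ W, ∀ Y ∈ W,
      ⟪tang W J X, tang W J Y⟫ =
        Real.cos θ ^ 2 * ((p : ℝ) * ⟪X, tang W J Y⟫ + (q : ℝ) * ⟪X, Y⟫) ∧
      ⟪norm' W J X, norm' W J Y⟫ =
        Real.sin θ ^ 2 * ((p : ℝ) * ⟪X, tang W J Y⟫ + (q : ℝ) * ⟪X, Y⟫) := by
  intro X hX Y hY
  have hTT : ⟪tang W J X, tang W J Y⟫ = Real.cos θ ^ 2 * ⟪J X, J Y⟫ :=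
    real_inner_map_map_eq_mul_of_norm_eq_mul W (W.starProjection.toLinearMap ∘ₗ J) J
      hslant hX hY
  have hJJ : ⟪J X, J Y⟫ = p * ⟪X, tang W J Y⟫ + q * ⟪X, Y⟫ := by
    rw [real_inner_apply_apply_of_sq_eq hJsym hJ2, inner_tang_right_of_mem W J hX]
  refine ⟨by rw [hTT, hJJ], ?_⟩
  rw [inner_norm'_norm', hTT, hJJ, Real.sin_sq]
  ring

/-- If `W` is slant with slant angle `θ` with respect to a symmetric metallic
structure `J` (`J² = pJ + qI`), then for all `X, Y ∈ W`:
`⟨TX, TY⟩ = cos²θ·(p⟨X, TY⟩ + q⟨X, Y⟩)` and `⟨NX, NY⟩ = sin²θ·(p⟨X, TY⟩ + q⟨X, Y⟩)`. -/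
theorem slant_inner_identities {V : Type*} [NormedAddCommGroup V] [InnerProductSpace ℝ V]
    (W : Submodule ℝ V) [W.HasOrthogonalProjection]
    (p q : ℕ) (hp : 0 < p) (hq : 0 < q)
    (J : V →ₗ[ℝ] V)
    (hJsym : ∀ x y : V, ⟪J x, y⟫ = ⟪x, J y⟫)
    (hJ2 : ∀ v : V, J (J v) = (p : ℝ) • J v + (q : ℝ) • v)
    (θ : ℝ) (hθ : θ ∈ Set.Icc 0 (Real.pi / 2))
    (hslant : ∀ X ∈ W, ‖tang W J X‖ = Real.cos θ * ‖J X‖) :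
    ∀ X ∈ W, ∀ Y ∈ W,
      ⟪tang W J X, tang W J Y⟫ =
        Real.cos θ ^ 2 * ((p : ℝ) * ⟪X, tang W J Y⟫ + (q : ℝ) * ⟪X, Y⟫) ∧
      ⟪norm' W J X, norm' W J Y⟫ =
        Real.sin θ ^ 2 * ((p : ℝ) * ⟪X, tang W J Y⟫ + (q : ℝ) * ⟪X, Y⟫) :=
  slant_inner_identities_general W p q J hJsym hJ2 θ hslant
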